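/- If A₁ is a subarc of an arc A in a metric space and A₁ ≠ A, then μ(A₁) < μ(A), where μ denotes the Morse μ-length. -/

import Mathlib

/-- The Morse `μ_k`-length of the arc parametrized by `f` on `[a,b]`:
the supremum, over monotone chains `c 0 ≤ c 1 ≤ ⋯ ≤ c k` in `[a,b]`, of
`min_i d(f (c (i-1)), f (c i))`. -/
noncomputable def morseMuK {X : Type*} [MetricSpace X] (f : ℝ → X) (a b : ℝ) (k : ℕ) : ℝ :=
  sSup {m : ℝ | ∃ c : Fin (k + 1) → ℝ, Monotone c ∧ (∀ i, c i ∈ Set.Icc a b) ∧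
    m = ⨅ i : Fin k, dist (f (c i.castSucc)) (f (c i.succ))}

/-- The Morse `μ`-length `μ = ∑_{k ≥ 1} 2^{-k} μ_k` of the arc parametrized by `f` on `[a,b]`. -/
noncomputable def morseMu {X : Type*} [MetricSpace X] (f : ℝ → X) (a b : ℝ) : ℝ :=
  ∑' k : ℕ, (1 / 2 ^ (k + 1) : ℝ) * morseMuK f a b (k + 1)

/-! Appending to a chain of `A₁` the endpoint of `A` that `A₁` misses, which lies at distance
at least some `ε > 0` from `A₁`, gives `min(μ_k(A₁), ε) ≤ μ_{k+1}(A)`. If we had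
`μ_k(A) ≤ μ_k(A₁)` for all `k`, then from the point where `μ_k(A₁) < ε` on (uniform continuity
makes `μ_k(A₁) → 0`) the sequence `μ_k(A₁)` would be nondecreasing, hence zero, contradicting
`μ_k(A) > 0` for an injective parametrization. Since always `μ_k(A₁) ≤ μ_k(A)`, the weighted
sums compare strictly. -/

open Set Metric Filter Topology

section

variable {X : Type*} [MetricSpace X] {f : ℝ → X} {a b a' b' ε : ℝ}

noncomputable def chainMinDist (f : ℝ → X) {k : ℕ} (c : Fin (k + 1) → ℝ) : ℝ :=
  ⨅ i : Fin k, dist (f (c i.castSucc)) (f (c i.succ))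

lemma chainMinDist_nonneg {k : ℕ} (c : Fin (k + 1) → ℝ) : 0 ≤ chainMinDist f c :=
  Real.iInf_nonneg fun _ => dist_nonneg

lemma chainMinDist_le_dist (f : ℝ → X) {k : ℕ} (c : Fin (k + 1) → ℝ) (i : Fin k) :
    chainMinDist f c ≤ dist (f (c i.castSucc)) (f (c i.succ)) :=
  ciInf_le ⟨0, by rintro _ ⟨j, rfl⟩; exact dist_nonneg⟩ i

lemma chainMinDist_le_diam {k : ℕ} {c : Fin (k + 1) → ℝ}
    (hb : Bornology.IsBounded (f '' Icc a b)) (hc : ∀ i, c i ∈ Icc a b) :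
    chainMinDist f c ≤ diam (f '' Icc a b) := by
  cases k with
  | zero => simpa [chainMinDist] using diam_nonneg
  | succ k =>
    exact (chainMinDist_le_dist f c 0).trans
      (dist_le_diam_of_mem hb (mem_image_of_mem f (hc _)) (mem_image_of_mem f (hc _)))

lemma chainMinDist_const (f : ℝ → X) (k : ℕ) (t : ℝ) :
    chainMinDist f (fun _ : Fin (k + 1) => t) = 0 := by
  simp [chainMinDist]

lemma le_chainMinDist_snoc {k : ℕ} (c : Fin (k + 1) → ℝ) (p : ℝ) :
    min (chainMinDist f c) (dist (f (c (Fin.last k))) (f p)) ≤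
      chainMinDist f (Fin.snoc c p) := by
  refine le_ciInf fun i => ?_
  induction i using Fin.lastCases with
  | last => simp
  | cast i =>
    rw [Fin.snoc_castSucc, Fin.succ_castSucc, Fin.snoc_castSucc]
    exact (min_le_left _ _).trans (chainMinDist_le_dist f c i)

lemma le_chainMinDist_cons {k : ℕ} (c : Fin (k + 1) → ℝ) (p : ℝ) :
    min (dist (f p) (f (c 0))) (chainMinDist f c) ≤ chainMinDist f (Fin.cons p c) := by
  refine le_ciInf fun i => ?_
  induction i using Fin.cases with
  | zero => simp
  | succ i =>
    rw [Fin.cons_succ, ← Fin.succ_castSucc, Fin.cons_succ]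
    exact (min_le_right _ _).trans (chainMinDist_le_dist f c i)

lemma morseMuK_eq_sSup (f : ℝ → X) (a b : ℝ) (k : ℕ) : morseMuK f a b k =
    sSup {m | ∃ c : Fin (k + 1) → ℝ, Monotone c ∧ (∀ i, c i ∈ Icc a b) ∧ m = chainMinDist f c} :=
  rfl

lemma morseMuK_nonneg (k : ℕ) : 0 ≤ morseMuK f a b k := by
  rw [morseMuK_eq_sSup]
  exact Real.sSup_nonneg (by rintro _ ⟨c, -, -, rfl⟩; exact chainMinDist_nonneg c)

lemma chainMinDist_le_morseMuK {k : ℕ} {c : Fin (k + 1) → ℝ}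
    (hb : Bornology.IsBounded (f '' Icc a b)) (hmono : Monotone c) (hc : ∀ i, c i ∈ Icc a b) :
    chainMinDist f c ≤ morseMuK f a b k := by
  rw [morseMuK_eq_sSup]
  refine le_csSup ⟨diam (f '' Icc a b), ?_⟩ ⟨c, hmono, hc, rfl⟩
  rintro _ ⟨c, -, hc, rfl⟩
  exact chainMinDist_le_diam hb hc

lemma morseMuK_le_of_forall_chainMinDist_le {k : ℕ} {m : ℝ} (hm : 0 ≤ m)
    (h : ∀ c : Fin (k + 1) → ℝ, Monotone c → (∀ i, c i ∈ Icc a b) → chainMinDist f c ≤ m) :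
    morseMuK f a b k ≤ m := by
  rw [morseMuK_eq_sSup]
  exact Real.sSup_le (by rintro _ ⟨c, hmono, hc, rfl⟩; exact h c hmono hc) hm

lemma exists_lt_chainMinDist_of_lt_morseMuK {k : ℕ} {x : ℝ} (hab : a ≤ b)
    (hx : x < morseMuK f a b k) :
    ∃ c : Fin (k + 1) → ℝ, Monotone c ∧ (∀ i, c i ∈ Icc a b) ∧ x < chainMinDist f c := by
  have hne : ∃ m : ℝ, ∃ c : Fin (k + 1) → ℝ, Monotone c ∧ (∀ i, c i ∈ Icc a b) ∧
      m = chainMinDist f c :=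
    ⟨0, fun _ => a, monotone_const, fun _ => ⟨le_rfl, hab⟩, (chainMinDist_const f k a).symm⟩
  rw [morseMuK_eq_sSup] at hx
  obtain ⟨_, ⟨c, hmono, hc, rfl⟩, hxc⟩ := exists_lt_of_lt_csSup hne hx
  exact ⟨c, hmono, hc, hxc⟩

lemma morseMuK_le_diam (hb : Bornology.IsBounded (f '' Icc a b)) (k : ℕ) :
    morseMuK f a b k ≤ diam (f '' Icc a b) :=
  morseMuK_le_of_forall_chainMinDist_le diam_nonneg fun _ _ hc => chainMinDist_le_diam hb hc

lemma morseMuK_mono (hsub : Icc a' b' ⊆ Icc a b) (hb : Bornology.IsBounded (f '' Icc a b))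
    (k : ℕ) : morseMuK f a' b' k ≤ morseMuK f a b k :=
  morseMuK_le_of_forall_chainMinDist_le (morseMuK_nonneg k) fun _ hmono hc =>
    chainMinDist_le_morseMuK hb hmono fun i => hsub (hc i)

lemma chainMinDist_pos {k : ℕ} {c : Fin (k + 2) → ℝ} (hmono : StrictMono c)
    (hc : ∀ i, c i ∈ Icc a b) (hf : InjOn f (Icc a b)) : 0 < chainMinDist f c := by
  obtain ⟨i, hi⟩ := exists_eq_ciInf_of_finite
    (f := fun i : Fin (k + 1) => dist (f (c i.castSucc)) (f (c i.succ)))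
  rw [chainMinDist, ← hi]
  exact dist_pos.2 fun h => (hmono i.castSucc_lt_succ).ne (hf (hc _) (hc _) h)

lemma morseMuK_pos (hab : a < b) (hb : Bornology.IsBounded (f '' Icc a b))
    (hf : InjOn f (Icc a b)) (k : ℕ) : 0 < morseMuK f a b (k + 1) := by
  have hstep : 0 < (b - a) / (k + 1) := div_pos (sub_pos.2 hab) k.cast_add_one_pos
  let c : Fin (k + 2) → ℝ := fun i => a + i * ((b - a) / (k + 1))
  have hmono : StrictMono c := fun i j hij => by
    have : ((i : ℕ) : ℝ) < j := Nat.cast_lt.2 hij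
    simp only [c]
    gcongr
  have hc : ∀ i, c i ∈ Icc a b := fun i => by
    have hi : ((i : ℕ) : ℝ) ≤ k + 1 := by exact_mod_cast Nat.lt_succ_iff.1 i.isLt
    refine ⟨le_add_of_nonneg_right (by positivity), ?_⟩
    calc c i ≤ a + (k + 1) * ((b - a) / (k + 1)) := by simp only [c]; gcongr
      _ = b := by field_simp; ring
  exact (chainMinDist_pos hmono hc hf).trans_le (chainMinDist_le_morseMuK hb hmono.monotone hc)

lemma add_mul_le_of_forall_add_le_succ {k : ℕ} {c : Fin (k + 1) → ℝ} {δ : ℝ}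
    (h : ∀ i : Fin k, c i.castSucc + δ ≤ c i.succ) (i : Fin (k + 1)) : c 0 + i * δ ≤ c i := by
  induction i using Fin.induction with
  | zero => simp
  | succ i ih =>
    have := h i
    simp only [Fin.val_succ, Fin.val_castSucc, Nat.cast_add, Nat.cast_one] at ih ⊢
    linarith

lemma morseMuK_le_of_dist_lt {δ : ℝ} {k : ℕ} (hε : 0 ≤ ε)
    (hδ : ∀ x ∈ Icc a b, ∀ y ∈ Icc a b, dist x y < δ → dist (f x) (f y) < ε)
    (hk : b - a < k * δ) : morseMuK f a b k ≤ ε := by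
  refine morseMuK_le_of_forall_chainMinDist_le hε fun c hmono hc => ?_
  by_contra! hlt
  have hgap : ∀ i : Fin k, c i.castSucc + δ ≤ c i.succ := fun i => by
    by_contra! hi
    refine (hlt.trans_le (chainMinDist_le_dist f c i)).not_gt (hδ _ (hc _) _ (hc _) ?_)
    rw [Real.dist_eq, abs_sub_comm, abs_of_nonneg (sub_nonneg.2 (hmono i.castSucc_le_succ))]
    linarith
  have := add_mul_le_of_forall_add_le_succ hgap (Fin.last k)
  simp only [Fin.val_last] at this
  linarith [(hc 0).1, (hc (Fin.last k)).2]

lemma tendsto_morseMuK_atTop (hf : ContinuousOn f (Icc a b)) :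
    Tendsto (morseMuK f a b) atTop (𝓝 0) := by
  refine tendsto_order.2 ⟨fun ε hε => .of_forall fun k => hε.trans_le (morseMuK_nonneg k),
    fun ε hε => ?_⟩
  obtain ⟨δ, hδ, hfδ⟩ := Metric.uniformContinuousOn_iff.1
    (isCompact_Icc.uniformContinuousOn_of_continuous hf) (ε / 2) (half_pos hε)
  obtain ⟨N, hN⟩ := exists_nat_gt ((b - a) / δ)
  filter_upwards [eventually_ge_atTop N] with k hk
  have hk : b - a < k * δ := by
    rw [div_lt_iff₀ hδ] at hN
    exact hN.trans_le (by gcongr)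
  exact (morseMuK_le_of_dist_lt (half_pos hε).le hfδ hk).trans_lt (half_lt_self hε)

lemma min_morseMuK_le_of_forall_chain {k l : ℕ} (hab' : a' ≤ b')
    (hb : Bornology.IsBounded (f '' Icc a b))
    (h : ∀ c : Fin (k + 1) → ℝ, Monotone c → (∀ i, c i ∈ Icc a' b') →
      ∃ c' : Fin (l + 1) → ℝ, Monotone c' ∧ (∀ i, c' i ∈ Icc a b) ∧
        min (chainMinDist f c) ε ≤ chainMinDist f c') :
    min (morseMuK f a' b' k) ε ≤ morseMuK f a b l := by
  refine le_of_forall_lt fun x hx => ?_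
  obtain ⟨c, hmono, hc, hxc⟩ := exists_lt_chainMinDist_of_lt_morseMuK hab'
    (hx.trans_le (min_le_left _ _))
  obtain ⟨c', hmono', hc', hcc'⟩ := h c hmono hc
  exact (lt_min hxc (hx.trans_le (min_le_right _ _))).trans_le
    (hcc'.trans (chainMinDist_le_morseMuK hb hmono' hc'))

lemma min_morseMuK_le_morseMuK_succ_of_le_dist_right (h1 : a ≤ a') (h2 : a' ≤ b') (h3 : b' ≤ b)
    (hb : Bornology.IsBounded (f '' Icc a b)) (hε : ∀ t ∈ Icc a' b', ε ≤ dist (f t) (f b))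
    (k : ℕ) : min (morseMuK f a' b' k) ε ≤ morseMuK f a b (k + 1) := by
  refine min_morseMuK_le_of_forall_chain h2 hb fun c hmono hc => ⟨Fin.snoc c b, ?_, ?_,
    (min_le_min_left _ (hε _ (hc _))).trans (le_chainMinDist_snoc c b)⟩
  · rw [← Fin.insertNth_last']
    exact Fin.insertNth_last_monotone hmono b ((hc _).2.trans h3)
  · refine Fin.lastCases ?_ fun i => ?_
    · simpa using (h1.trans (h2.trans h3))
    · simpa using Icc_subset_Icc h1 h3 (hc i)

lemma min_morseMuK_le_morseMuK_succ_of_le_dist_left (h1 : a ≤ a') (h2 : a' ≤ b') (h3 : b' ≤ b)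
    (hb : Bornology.IsBounded (f '' Icc a b)) (hε : ∀ t ∈ Icc a' b', ε ≤ dist (f t) (f a))
    (k : ℕ) : min (morseMuK f a' b' k) ε ≤ morseMuK f a b (k + 1) := by
  refine min_morseMuK_le_of_forall_chain h2 hb fun c hmono hc => ⟨Fin.cons a c, ?_, ?_, ?_⟩
  · rw [← Fin.insertNth_zero']
    exact Fin.insertNth_zero_monotone hmono a (h1.trans (hc _).1)
  · refine Fin.cases ?_ fun i => ?_
    · simpa using (h1.trans (h2.trans h3))
    · simpa using Icc_subset_Icc h1 h3 (hc i)
  · rw [min_comm]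
    exact (min_le_min_right _ ((hε _ (hc _)).trans_eq (dist_comm _ _))).trans
      (le_chainMinDist_cons c a)

lemma IsClosed.exists_pos_le_dist_of_notMem {K : Set X} (hK : IsClosed K) {x : X}
    (hx : x ∉ K) :
    ∃ ε > 0, ∀ y ∈ K, ε ≤ dist y x := by
  rcases K.eq_empty_or_nonempty with rfl | hne
  · exact ⟨1, one_pos, by simp⟩
  exact ⟨infDist x K, (hK.notMem_iff_infDist_pos hne).1 hx,
    fun y hy => (infDist_le_dist_of_mem hy).trans_eq (dist_comm x y)⟩

lemma exists_lt_of_tendsto_zero_of_min_le_succ {u v : ℕ → ℝ} (hu : Tendsto u atTop (𝓝 0))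
    (hv : ∀ k, 0 < v (k + 1)) (hε : 0 < ε) (huv : ∀ k, min (u k) ε ≤ v (k + 1)) :
    ∃ k, u (k + 1) < v (k + 1) := by
  by_contra! hvu
  obtain ⟨N, hN⟩ := eventually_atTop.1 (hu.eventually (gt_mem_nhds hε))
  have hmono : Monotone fun n => u (n + (N + 1)) := monotone_nat_of_le_succ fun n => by
    have := huv (n + (N + 1))
    rw [min_eq_left (hN _ (by omega)).le] at this
    exact this.trans ((hvu _).trans_eq (by ring_nf))
  have := hmono.ge_of_tendsto ((tendsto_add_atTop_iff_nat (N + 1)).2 hu) 0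
  exact (hv N).not_ge ((hvu N).trans (by simpa using this))

lemma summable_morseMu (hb : Bornology.IsBounded (f '' Icc a b)) :
    Summable fun k : ℕ => (1 / 2 ^ (k + 1) : ℝ) * morseMuK f a b (k + 1) := by
  have hgeom : Summable fun k : ℕ => (1 / 2 ^ (k + 1) : ℝ) * diam (f '' Icc a b) := by
    simp_rw [← one_div_pow]
    exact ((summable_nat_add_iff 1).2 summable_geometric_two).mul_right _
  exact .of_nonneg_of_le (fun k => mul_nonneg (by positivity) (morseMuK_nonneg _))
    (fun k => mul_le_mul_of_nonneg_left (morseMuK_le_diam hb _) (by positivity)) hgeom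

lemma morseMu_lt_morseMu_of_subset (hsub : Icc a' b' ⊆ Icc a b)
    (hb : Bornology.IsBounded (f '' Icc a b)) {j : ℕ}
    (hj : morseMuK f a' b' (j + 1) < morseMuK f a b (j + 1)) : morseMu f a' b' < morseMu f a b :=
  Summable.tsum_lt_tsum
    (fun k => mul_le_mul_of_nonneg_left (morseMuK_mono hsub hb _) (by positivity))
    (mul_lt_mul_of_pos_left hj (by positivity))
    (summable_morseMu (hb.subset (image_mono hsub))) (summable_morseMu hb)

end

/-- If `A₁` is a proper subarc (or point) of an arc `A` in a metric space, then
`μ(A₁) < μ(A)`.  The arc `A` is parametrized by an injective continuous `γ` on `[a,b]`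
and the subarc `A₁` corresponds to `[a',b'] ⊆ [a,b]` with `[a',b'] ≠ [a,b]`. -/
theorem morseMu_lt_of_proper_subarc {X : Type*} [MetricSpace X]
    (γ : ℝ → X) (a b a' b' : ℝ) (hab : a < b)
    (h1 : a ≤ a') (h2 : a' ≤ b') (h3 : b' ≤ b) (hne : ¬(a' = a ∧ b' = b))
    (hγc : ContinuousOn γ (Set.Icc a b)) (hγi : Set.InjOn γ (Set.Icc a b)) :
    morseMu γ a' b' < morseMu γ a b := by
  have hsub : Icc a' b' ⊆ Icc a b := Icc_subset_Icc h1 h3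
  have hb : Bornology.IsBounded (γ '' Icc a b) :=
    (isCompact_Icc.image_of_continuousOn hγc).isBounded
  have hsep {p : ℝ} (hp : p ∈ Icc a b) (hp' : p ∉ Icc a' b') :
      ∃ ε > 0, ∀ t ∈ Icc a' b', ε ≤ dist (γ t) (γ p) := by
    have hclosed := (isCompact_Icc.image_of_continuousOn (hγc.mono hsub)).isClosed
    obtain ⟨ε, hε, hdist⟩ := hclosed.exists_pos_le_dist_of_notMem (x := γ p)
      fun ⟨t, ht, hpt⟩ => hp' (hγi (hsub ht) hp hpt ▸ ht)
    exact ⟨ε, hε, fun t ht => hdist _ (mem_image_of_mem γ ht)⟩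
  obtain ⟨ε, hε, hext⟩ : ∃ ε > 0, ∀ k,
      min (morseMuK γ a' b' k) ε ≤ morseMuK γ a b (k + 1) := by
    rcases not_and_or.1 hne with ha | hb'
    · obtain ⟨ε, hε, hdist⟩ := hsep ⟨le_rfl, hab.le⟩ fun h => ha (le_antisymm h.1 h1)
      exact ⟨ε, hε, min_morseMuK_le_morseMuK_succ_of_le_dist_left h1 h2 h3 hb hdist⟩
    · obtain ⟨ε, hε, hdist⟩ := hsep ⟨hab.le, le_rfl⟩ fun h => hb' (le_antisymm h3 h.2)
      exact ⟨ε, hε, min_morseMuK_le_morseMuK_succ_of_le_dist_right h1 h2 h3 hb hdist⟩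
  obtain ⟨j, hj⟩ := exists_lt_of_tendsto_zero_of_min_le_succ
    (tendsto_morseMuK_atTop (hγc.mono hsub)) (morseMuK_pos hab hb hγi) hε hext
  exact morseMu_lt_morseMu_of_subset hsub hb hj
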